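/- arXiv:1801.05626 — 3 statements merged into one kernel-verified Lean document; each statement's English description precedes it below -/
import Mathlib

section
/- Let g be a Borel measurable map from a complete metric space M₁ to a separable metric space M₂. Then there exists a meagre (first category) set F ⊆ M₁ such that the restriction of g to M₁ \ F is continuous. -/
/-! Each preimage of a basic open set of `M₂` is Borel, hence agrees with an open set off a meagre
set. As `M₂` has a countable basis, these countably many meagre sets have a meagre union `F`, and
off `F` every basic preimage is relatively open. -/

open Topology Set Filter TopologicalSpace

section
variable {X Y : Type*} [TopologicalSpace X] [TopologicalSpace Y]

theorem isMeagre_setOf_not_mem_iff_of_residualEq {s t : Set X} (h : s =ᵇ t) :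
    IsMeagre {x | ¬(x ∈ s ↔ x ∈ t)} := by
  rw [IsMeagre, compl_ofPred]
  simp only [not_not]
  exact eventuallyEq_set.mp h

theorem TopologicalSpace.IsTopologicalBasis.continuous_domRestrict_compl_of_forall_mem_iff
    {b : Set (Set Y)} (hb : IsTopologicalBasis b) {f : X → Y} {F : Set X} {u : Set Y → Set X}
    (hu : ∀ s ∈ b, IsOpen (u s)) (hfu : ∀ s ∈ b, ∀ x ∉ F, (f x ∈ s ↔ x ∈ u s)) :
    Continuous (Fᶜ.domRestrict f) := by
  refine hb.continuous_iff.mpr fun s hs => ?_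
  have hpre : Fᶜ.domRestrict f ⁻¹' s = Subtype.val ⁻¹' u s := by
    ext ⟨x, hx⟩
    exact hfu s hs x hx
  rw [hpre]
  exact (hu s hs).preimage continuous_subtype_val

theorem exists_isMeagre_continuous_domRestrict_compl [SecondCountableTopology Y] {f : X → Y}
    (hf : ∀ s, IsOpen s → BaireMeasurableSet (f ⁻¹' s)) :
    ∃ F : Set X, IsMeagre F ∧ Continuous (Fᶜ.domRestrict f) := by
  obtain ⟨b, hbc, -, hb⟩ := exists_countable_basis Y
  choose! u hu hfu using fun s hs => (hf s (hb.isOpen hs)).residualEq_isOpen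
  refine ⟨⋃ s ∈ b, {x | ¬(x ∈ f ⁻¹' s ↔ x ∈ u s)}, ?_, ?_⟩
  · exact isMeagre_biUnion hbc fun s hs => isMeagre_setOf_not_mem_iff_of_residualEq (hfu s hs)
  · refine hb.continuous_domRestrict_compl_of_forall_mem_iff hu fun s hs x hx => ?_
    by_contra h
    exact hx (mem_biUnion hs h)

end

theorem borel_map_continuous_off_meagre_general
    {M₁ M₂ : Type*} [MetricSpace M₁]
    [MeasurableSpace M₁] [BorelSpace M₁]
    [MetricSpace M₂] [TopologicalSpace.SeparableSpace M₂]
    [MeasurableSpace M₂] [BorelSpace M₂]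
    (g : M₁ → M₂) (hg : Measurable g) :
    ∃ F : Set M₁, IsMeagre F ∧ Continuous (Fᶜ.restrict g) :=
  have : SecondCountableTopology M₂ := UniformSpace.secondCountable_of_separable M₂
  exists_isMeagre_continuous_domRestrict_compl fun _ hs =>
    (hs.measurableSet.preimage hg).baireMeasurableSet

/-- A Borel measurable map `g` from a complete metric space `M₁`
to a separable metric space `M₂` is continuous off a meagre (first category) set:
there is a meagre set `F ⊆ M₁` such that the restriction of `g` to `M₁ \ F`
is continuous. -/
theorem borel_map_continuous_off_meagre
    {M₁ M₂ : Type*} [MetricSpace M₁] [CompleteSpace M₁]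
    [MeasurableSpace M₁] [BorelSpace M₁]
    [MetricSpace M₂] [TopologicalSpace.SeparableSpace M₂]
    [MeasurableSpace M₂] [BorelSpace M₂]
    (g : M₁ → M₂) (hg : Measurable g) :
    ∃ F : Set M₁, IsMeagre F ∧ Continuous (Fᶜ.restrict g) :=
  borel_map_continuous_off_meagre_general g hg
end

section
/- Let (X_i, p_i) and (Y_i, q_i) be sequences of pointed compact metric spaces converging in the Gromov–Hausdorff sense to compact metric spaces (X, p) and (Y, q) respectively. If f_i : X_i → Y_i are L-biLipschitz maps with f_i(p_i) = q_i for a fixed constant L ≥ 1, then there exists an L-biLipschitz map f : X → Y with f(p) = q. -/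
/-!
Composing `fᵢ` with an `ε`-approximation `Yᵢ → Y` and with a quasi-inverse `X → Xᵢ` of an
`ε`-approximation `Xᵢ → X` gives a pointed map `X → Y` that is `L`-biLipschitz up to an additive
error `O(Lε)`. For each `δ > 0` the pointed maps `X → Y` that are `L`-biLipschitz up to error `δ`
form a nonempty closed subset of the compact space `X → Y` (product topology), and these sets
shrink as `δ ↓ 0`; any map in their intersection is exactly `L`-biLipschitz.
-/

/-- `φ : X → Y` is a pointed `ε`-approximation: it sends the basepoint to the
basepoint, distorts distances by at most `ε` and has `ε`-dense image. -/
def IsPointedGHApprox {X Y : Type*} [MetricSpace X] [MetricSpace Y]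
    (ε : ℝ) (p : X) (q : Y) (φ : X → Y) : Prop :=
  φ p = q ∧ (∀ x x' : X, |dist (φ x) (φ x') - dist x x'| ≤ ε) ∧
    ∀ y : Y, ∃ x : X, dist (φ x) y ≤ ε

/-- A sequence of pointed compact metric spaces converges to a pointed compact
metric space in the Gromov–Hausdorff sense iff for every `ε > 0` there are
eventually pointed `ε`-approximations into the limit. -/
def PointedGHConverges {X : ℕ → Type*} [∀ i, MetricSpace (X i)]
    {Xlim : Type*} [MetricSpace Xlim] (p : ∀ i, X i) (plim : Xlim) : Prop :=
  ∀ ε > (0:ℝ), ∃ N : ℕ, ∀ i ≥ N, ∃ φ : X i → Xlim, IsPointedGHApprox ε (p i) plim φ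

def IsApproxBiLipschitz {α β : Type*} [PseudoMetricSpace α] [PseudoMetricSpace β]
    (L δ : ℝ) (g : α → β) : Prop :=
  ∀ x x' : α, dist x x' / L - δ ≤ dist (g x) (g x') ∧ dist (g x) (g x') ≤ L * dist x x' + δ

namespace IsApproxBiLipschitz

variable {α β γ : Type*} [PseudoMetricSpace α] [PseudoMetricSpace β] [PseudoMetricSpace γ]
  {K L δ δ' η : ℝ} {f : α → β} {g : β → γ}

theorem mono (hf : IsApproxBiLipschitz L δ f) (hδ : δ ≤ δ') : IsApproxBiLipschitz L δ' f :=
  fun x x' => ⟨by linarith [(hf x x').1], by linarith [(hf x x').2]⟩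

theorem of_forall_pos (h : ∀ δ > 0, IsApproxBiLipschitz L δ f) : IsApproxBiLipschitz L 0 f := by
  intro x x'
  rw [sub_zero, add_zero]
  exact ⟨le_of_forall_pos_le_add fun δ hδ => by linarith [(h δ hδ x x').1],
    le_of_forall_pos_le_add fun δ hδ => (h δ hδ x x').2⟩

theorem one_iff :
    IsApproxBiLipschitz 1 δ f ↔ ∀ x x', |dist (f x) (f x') - dist x x'| ≤ δ := by
  simp only [IsApproxBiLipschitz, div_one, one_mul, abs_sub_le_iff]
  refine forall₂_congr fun x x' => ⟨fun h => ⟨?_, ?_⟩, fun h => ⟨?_, ?_⟩⟩ <;> linarith [h.1, h.2]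

theorem comp (hg : IsApproxBiLipschitz K η g) (hf : IsApproxBiLipschitz L δ f) (hK : 1 ≤ K)
    (hδ : 0 ≤ δ) : IsApproxBiLipschitz (K * L) (K * δ + η) (g ∘ f) := by
  intro x x'
  obtain ⟨hf₁, hf₂⟩ := hf x x'
  obtain ⟨hg₁, hg₂⟩ := hg (f x) (f x')
  have hK₀ : 0 < K := by linarith
  constructor
  · calc dist x x' / (K * L) - (K * δ + η)
        ≤ (dist x x' / L - δ) / K - η := by
          rw [sub_div, div_div, mul_comm L K]
          linarith [div_le_self hδ hK, le_mul_of_one_le_left hδ hK]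
      _ ≤ dist (f x) (f x') / K - η := by gcongr
      _ ≤ dist (g (f x)) (g (f x')) := hg₁
  · calc dist (g (f x)) (g (f x')) ≤ K * dist (f x) (f x') + η := hg₂
      _ ≤ K * (L * dist x x' + δ) + η := by gcongr
      _ = K * L * dist x x' + (K * δ + η) := by ring

end IsApproxBiLipschitz

theorem isClosed_setOf_isApproxBiLipschitz {α β : Type*} [PseudoMetricSpace α]
    [PseudoMetricSpace β] (L δ : ℝ) : IsClosed {g : α → β | IsApproxBiLipschitz L δ g} := by
  simp only [IsApproxBiLipschitz, Set.ofPred_forall, Set.ofPred_and]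
  have hd : ∀ x x' : α, Continuous fun g : α → β => dist (g x) (g x') := fun x x' =>
    (continuous_apply x).dist (continuous_apply x')
  exact isClosed_iInter fun x => isClosed_iInter fun x' =>
    (isClosed_le continuous_const (hd x x')).inter (isClosed_le (hd x x') continuous_const)

theorem exists_isApproxBiLipschitz_zero_of_forall_pos {α β : Type*} [PseudoMetricSpace α]
    [MetricSpace β] [CompactSpace β] {L : ℝ} (a : α) (b : β)
    (h : ∀ δ > 0, ∃ g : α → β, g a = b ∧ IsApproxBiLipschitz L δ g) :
    ∃ g : α → β, g a = b ∧ IsApproxBiLipschitz L 0 g := by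
  let S : Set.Ioi (0 : ℝ) → Set (α → β) := fun δ =>
    {g | g a = b} ∩ {g | IsApproxBiLipschitz L δ g}
  have hS_closed : ∀ δ, IsClosed (S δ) := fun δ =>
    (isClosed_eq (continuous_apply a) continuous_const).inter
      (isClosed_setOf_isApproxBiLipschitz L δ)
  have hS_directed : Directed (· ⊇ ·) S := directed_of_isDirected_ge
    fun δ δ' hδ g hg => ⟨hg.1, hg.2.mono (Subtype.coe_le_coe.2 hδ)⟩
  obtain ⟨g, hg⟩ := IsCompact.nonempty_iInter_of_directed_nonempty_isCompact_isClosed S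
    hS_directed (fun δ => h δ δ.2) (fun δ => (hS_closed δ).isCompact) hS_closed
  simp only [Set.mem_iInter] at hg
  exact ⟨g, (hg ⟨1, Set.mem_Ioi.2 one_pos⟩).1, .of_forall_pos fun δ hδ => (hg ⟨δ, hδ⟩).2⟩

namespace IsPointedGHApprox

variable {X Y : Type*} [MetricSpace X] [MetricSpace Y] {ε : ℝ} {p : X} {q : Y} {φ : X → Y}

theorem nonneg (h : IsPointedGHApprox ε p q φ) : 0 ≤ ε := by
  simpa using h.2.1 p p

theorem isApproxBiLipschitz (h : IsPointedGHApprox ε p q φ) : IsApproxBiLipschitz 1 ε φ :=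
  IsApproxBiLipschitz.one_iff.2 h.2.1

theorem exists_quasiInverse (h : IsPointedGHApprox ε p q φ) :
    ∃ r : Y → X, r q = p ∧ IsApproxBiLipschitz 1 (3 * ε) r := by
  classical
  have hε := h.nonneg
  obtain ⟨hφp, hφ, hdense⟩ := h
  choose r₀ hr₀ using hdense
  let r := Function.update r₀ q p
  have hr : ∀ y, dist (φ (r y)) y ≤ ε := by
    intro y
    by_cases hy : y = q
    · subst hy
      simp [r, hφp, hε]
    · simpa [r, hy] using hr₀ y
  refine ⟨r, Function.update_self .., IsApproxBiLipschitz.one_iff.2 fun y y' => ?_⟩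
  have hφr : |dist (φ (r y)) (φ (r y')) - dist y y'| ≤ ε + ε := by
    rw [← Real.dist_eq]
    exact (dist_dist_dist_le _ _ _ _).trans (add_le_add (hr y) (hr y'))
  calc |dist (r y) (r y') - dist y y'|
      ≤ |dist (r y) (r y') - dist (φ (r y)) (φ (r y'))|
        + |dist (φ (r y)) (φ (r y')) - dist y y'| := abs_sub_le _ _ _
    _ ≤ ε + (ε + ε) := add_le_add (by rw [abs_sub_comm]; exact hφ _ _) hφr
    _ = 3 * ε := by ring

end IsPointedGHApprox

theorem exists_isApproxBiLipschitz_of_pointedGHConverges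
    {X : ℕ → Type*} [∀ i, MetricSpace (X i)] {Y : ℕ → Type*} [∀ i, MetricSpace (Y i)]
    {Xlim Ylim : Type*} [MetricSpace Xlim] [MetricSpace Ylim]
    {p : ∀ i, X i} {plim : Xlim} {q : ∀ i, Y i} {qlim : Ylim}
    (hX : PointedGHConverges p plim) (hY : PointedGHConverges q qlim)
    {L : ℝ} (hL : 1 ≤ L) {f : ∀ i, X i → Y i} (hbase : ∀ i, f i (p i) = q i)
    (hf : ∀ i, IsApproxBiLipschitz L 0 (f i)) {δ : ℝ} (hδ : 0 < δ) :
    ∃ g : Xlim → Ylim, g plim = qlim ∧ IsApproxBiLipschitz L δ g := by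
  have hL₀ : 0 < L := by linarith
  set ε := δ / (4 * L) with hε_def
  have hε : 0 < ε := by positivity
  obtain ⟨M, hM⟩ := hX ε hε
  obtain ⟨N, hN⟩ := hY ε hε
  obtain ⟨φ, hφ⟩ := hM (max M N) (le_max_left _ _)
  obtain ⟨ψ, hψ⟩ := hN (max M N) (le_max_right _ _)
  obtain ⟨r, hr_base, hr⟩ := hφ.exists_quasiInverse
  refine ⟨ψ ∘ f _ ∘ r, by simp [hr_base, hbase, hψ.1], ?_⟩
  have hg := hψ.isApproxBiLipschitz.comp ((hf _).comp hr hL (by positivity)) le_rfl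
    (by positivity)
  rw [one_mul, mul_one] at hg
  refine hg.mono ?_
  calc 1 * (L * (3 * ε) + 0) + ε ≤ 4 * L * ε := by nlinarith
    _ = δ := by rw [hε_def]; field_simp

theorem bilipschitz_limit_of_pointedGH_general
    {X : ℕ → Type*} [∀ i, MetricSpace (X i)]
    {Y : ℕ → Type*} [∀ i, MetricSpace (Y i)]
    {Xlim : Type*} [MetricSpace Xlim]
    {Ylim : Type*} [MetricSpace Ylim] [CompactSpace Ylim]
    (p : ∀ i, X i) (plim : Xlim) (q : ∀ i, Y i) (qlim : Ylim)
    (hX : PointedGHConverges p plim) (hY : PointedGHConverges q qlim)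
    (L : ℝ) (hL : 1 ≤ L) (f : ∀ i, X i → Y i)
    (hbase : ∀ i, f i (p i) = q i)
    (hbilip : ∀ i, ∀ x x' : X i,
      dist x x' / L ≤ dist (f i x) (f i x') ∧ dist (f i x) (f i x') ≤ L * dist x x') :
    ∃ g : Xlim → Ylim, g plim = qlim ∧
      ∀ x x' : Xlim, dist x x' / L ≤ dist (g x) (g x') ∧ dist (g x) (g x') ≤ L * dist x x' := by
  have hf : ∀ i, IsApproxBiLipschitz L 0 (f i) := fun i x x' => by
    simpa only [sub_zero, add_zero] using hbilip i x x'
  obtain ⟨g, hg_base, hg⟩ := exists_isApproxBiLipschitz_zero_of_forall_pos plim qlim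
    fun δ hδ => exists_isApproxBiLipschitz_of_pointedGHConverges hX hY hL hbase hf hδ
  exact ⟨g, hg_base, fun x x' => by simpa only [sub_zero, add_zero] using hg x x'⟩

/-- **convergence of L-biLipschitz maps.** If `(Xᵢ, pᵢ) → (X, p)` and
`(Yᵢ, qᵢ) → (Y, q)` are Gromov–Hausdorff convergent sequences of pointed compact
metric spaces and `fᵢ : Xᵢ → Yᵢ` are `L`-biLipschitz maps with `fᵢ(pᵢ) = qᵢ`
(`L ≥ 1` fixed), then there is an `L`-biLipschitz map `f : X → Y` with `f p = q`. -/
theorem bilipschitz_limit_of_pointedGH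
    {X : ℕ → Type*} [∀ i, MetricSpace (X i)] [∀ i, CompactSpace (X i)]
    {Y : ℕ → Type*} [∀ i, MetricSpace (Y i)] [∀ i, CompactSpace (Y i)]
    {Xlim : Type*} [MetricSpace Xlim] [CompactSpace Xlim] [Nonempty Xlim]
    {Ylim : Type*} [MetricSpace Ylim] [CompactSpace Ylim] [Nonempty Ylim]
    (p : ∀ i, X i) (plim : Xlim) (q : ∀ i, Y i) (qlim : Ylim)
    (hX : PointedGHConverges p plim) (hY : PointedGHConverges q qlim)
    (L : ℝ) (hL : 1 ≤ L) (f : ∀ i, X i → Y i)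
    (hbase : ∀ i, f i (p i) = q i)
    (hbilip : ∀ i, ∀ x x' : X i,
      dist x x' / L ≤ dist (f i x) (f i x') ∧ dist (f i x) (f i x') ≤ L * dist x x') :
    ∃ g : Xlim → Ylim, g plim = qlim ∧
      ∀ x x' : Xlim, dist x x' / L ≤ dist (g x) (g x') ∧ dist (g x) (g x') ≤ L * dist x x' :=
  bilipschitz_limit_of_pointedGH_general p plim q qlim hX hY L hL f hbase hbilip
end

section
/- Let γ : [0,1] → M be an absolutely continuous curve in a metric space, i.e., d(γ(s), γ(t)) ≤ ∫_s^t g(r) dr for all s ≤ t, for some g ∈ L¹(0,1). Then the metric speed |γ̇|(t) = lim_{h→0} d(γ(t+h), γ(t))/|h| exists for almost every t ∈ [0,1], belongs to L¹(0,1), and satisfies |γ̇|(t) ≤ g(t) a.e. for every such g. -/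
open Filter Topology MeasureTheory

section Helpers

open Set Function intervalIntegral

private lemma abs_tendsto_zero_within : Tendsto (fun h : ℝ => |h|) (𝓝[≠] (0:ℝ)) (𝓝[>] 0) := by
  rw [tendsto_nhdsWithin_iff]
  refine ⟨?_, ?_⟩
  · have : Tendsto (fun h : ℝ => |h|) (𝓝 0) (𝓝 |(0:ℝ)|) := continuous_abs.tendsto 0
    rw [abs_zero] at this
    exact this.mono_left nhdsWithin_le_nhds
  · filter_upwards [self_mem_nhdsWithin] with h (hh : h ≠ 0)
    exact abs_pos.2 hh

private lemma map_add_nhdsNE (t : ℝ) :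
    Tendsto (fun h : ℝ => t + h) (𝓝[≠] (0:ℝ)) (𝓝[≠] t) := by
  rw [tendsto_nhdsWithin_iff]
  refine ⟨?_, ?_⟩
  · have : Tendsto (fun h : ℝ => t + h) (𝓝 0) (𝓝 (t + 0)) :=
      (continuous_const.add continuous_id).tendsto 0
    rw [add_zero] at this
    exact this.mono_left nhdsWithin_le_nhds
  · filter_upwards [self_mem_nhdsWithin] with h (hh : h ≠ 0)
    simpa using hh

private lemma leb_pt {f : ℝ → ℝ} (hf : Integrable f volume) :
    ∀ᵐ t : ℝ, Tendsto (fun h : ℝ => (∫ r in Set.uIoc t (t+h), |f r - f t|) / |h|)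
      (𝓝[≠] (0:ℝ)) (𝓝 0) := by
  filter_upwards [IsUnifLocDoublingMeasure.ae_tendsto_average_norm_sub
    (volume : Measure ℝ) hf.locallyIntegrable 1] with t ht
  have key := ht (fun _ : ℝ => t) (fun h => |h|) abs_tendsto_zero_within
    (by filter_upwards with h; simpa using Metric.mem_closedBall_self (abs_nonneg h))
  have hsq : ∀ h : ℝ, h ≠ 0 →
      (∫ r in Set.uIoc t (t+h), |f r - f t|) / |h| ≤
        2 * ⨍ y in Metric.closedBall t |h|, ‖f y - f t‖ := by
    intro h hh
    have hpos : (0:ℝ) < |h| := abs_pos.2 hh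
    have hsub : Set.uIoc t (t+h) ⊆ Metric.closedBall t |h| := by
      intro r hr
      rw [Set.mem_uIoc] at hr
      rw [Metric.mem_closedBall, Real.dist_eq]
      rcases hr with ⟨h1, h2⟩ | ⟨h1, h2⟩
      · rw [abs_le]; constructor <;> [linarith [neg_abs_le h]; linarith [le_abs_self h]]
      · rw [abs_le]; constructor <;> [linarith [neg_abs_le h]; linarith [le_abs_self h]]
    have hint : IntegrableOn (fun r => |f r - f t|) (Metric.closedBall t |h|) volume := by
      apply Integrable.abs
      exact hf.integrableOn.sub (integrableOn_const measure_closedBall_lt_top.ne)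
    have hmono : (∫ r in Set.uIoc t (t+h), |f r - f t|) ≤
        ∫ r in Metric.closedBall t |h|, |f r - f t| :=
      setIntegral_mono_set hint (Filter.Eventually.of_forall fun r => abs_nonneg _)
        (HasSubset.Subset.eventuallyLE hsub)
    have havg : (⨍ y in Metric.closedBall t |h|, ‖f y - f t‖) =
        (2 * |h|)⁻¹ * ∫ y in Metric.closedBall t |h|, |f y - f t| := by
      rw [setAverage_eq, measureReal_def, Real.volume_closedBall, ENNReal.toReal_ofReal (by positivity)]
      simp [Real.norm_eq_abs, smul_eq_mul]
    rw [havg, div_le_iff₀ hpos] at *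
    calc (∫ r in Set.uIoc t (t+h), |f r - f t|)
        ≤ ∫ r in Metric.closedBall t |h|, |f r - f t| := hmono
      _ = 2 * ((2 * |h|)⁻¹ * ∫ y in Metric.closedBall t |h|, |f y - f t|) * |h| := by
          field_simp
  have k2 : Tendsto (fun h : ℝ => 2 * ⨍ y in Metric.closedBall t |h|, ‖f y - f t‖)
      (𝓝[≠] (0:ℝ)) (𝓝 0) := by simpa using key.const_mul 2
  refine squeeze_zero' ?_ ?_ k2
  · filter_upwards with h
    positivity
  · filter_upwards [self_mem_nhdsWithin] with h (hh : h ≠ 0) using hsq h hh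

private lemma avg_tendsto {f : ℝ → ℝ} (hf : Integrable f volume) {t : ℝ}
    (ht : Tendsto (fun h : ℝ => (∫ r in Set.uIoc t (t+h), |f r - f t|) / |h|)
      (𝓝[≠] (0:ℝ)) (𝓝 0)) :
    Tendsto (fun h : ℝ => (∫ r in Set.uIoc t (t+h), f r) / |h|) (𝓝[≠] (0:ℝ)) (𝓝 (f t)) := by
  rw [tendsto_iff_norm_sub_tendsto_zero]
  refine squeeze_zero' ?_ ?_ ht
  · filter_upwards with h; positivity
  · filter_upwards [self_mem_nhdsWithin] with h (hh : h ≠ 0)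
    have hpos : (0:ℝ) < |h| := abs_pos.2 hh
    have hvol : (volume (Set.uIoc t (t+h))).toReal = |h| := by
      rw [Set.uIoc, Real.volume_Ioc, ENNReal.toReal_ofReal (by simp [max_sub_min_eq_abs])]
      simp [max_sub_min_eq_abs]
    have hconst : (∫ _ in Set.uIoc t (t+h), f t) = |h| * f t := by
      rw [setIntegral_const, measureReal_def, hvol, smul_eq_mul]
    have hsub : (∫ r in Set.uIoc t (t+h), f r) - |h| * f t
        = ∫ r in Set.uIoc t (t+h), (f r - f t) := by
      rw [← hconst, ← integral_sub hf.integrableOn (integrableOn_const ?_)]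
      rw [Set.uIoc, Real.volume_Ioc]; exact ENNReal.ofReal_ne_top
    have habs : |(∫ r in Set.uIoc t (t+h), (f r - f t))| ≤
        ∫ r in Set.uIoc t (t+h), |f r - f t| := by
      simpa [Real.norm_eq_abs] using
        MeasureTheory.norm_integral_le_integral_norm (μ := volume.restrict (Set.uIoc t (t+h)))
          (f := fun r => f r - f t)
    rw [Real.norm_eq_abs]
    calc |(∫ r in Set.uIoc t (t+h), f r) / |h| - f t|
        = |(∫ r in Set.uIoc t (t+h), f r) - |h| * f t| / |h| := by
          rw [← abs_of_pos hpos, ← abs_div]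
          congr 1
          field_simp
          simp only [abs_abs]; ring
      _ ≤ (∫ r in Set.uIoc t (t+h), |f r - f t|) / |h| := by
          rw [hsub]
          gcongr

private lemma primitive_hasDerivAt {f : ℝ → ℝ} (hf : Integrable f volume) {t : ℝ}
    (ht : Tendsto (fun h : ℝ => (∫ r in Set.uIoc t (t+h), |f r - f t|) / |h|)
      (𝓝[≠] (0:ℝ)) (𝓝 0)) :
    HasDerivAt (fun u => ∫ x in (0:ℝ)..u, f x) (f t) t := by
  rw [hasDerivAt_iff_tendsto_slope]
  rw [tendsto_iff_norm_sub_tendsto_zero]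
  have hcomp : Tendsto (fun y : ℝ => (∫ r in Set.uIoc t y, |f r - f t|) / |y - t|)
      (𝓝[≠] t) (𝓝 0) := by
    have hmap : Tendsto (fun y : ℝ => y - t) (𝓝[≠] t) (𝓝[≠] (0:ℝ)) := by
      rw [tendsto_nhdsWithin_iff]
      refine ⟨?_, ?_⟩
      · have : Tendsto (fun y : ℝ => y - t) (𝓝 t) (𝓝 (t - t)) :=
          (continuous_id.sub continuous_const).tendsto t
        rw [sub_self] at this
        exact this.mono_left nhdsWithin_le_nhds
      · filter_upwards [self_mem_nhdsWithin] with y (hy : y ≠ t)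
        simpa [sub_eq_zero] using hy
    have := ht.comp hmap
    refine this.congr fun y => ?_
    simp [Function.comp, add_sub_cancel]
  refine squeeze_zero' ?_ ?_ hcomp
  · filter_upwards with y; positivity
  · filter_upwards [self_mem_nhdsWithin] with y (hy : y ≠ t)
    have hyt : y - t ≠ 0 := sub_ne_zero.2 hy
    have h1 : (∫ x in (0:ℝ)..y, f x) - (∫ x in (0:ℝ)..t, f x) = ∫ x in t..y, f x :=
      integral_interval_sub_left hf.intervalIntegrable hf.intervalIntegrable
    have h2 : (∫ x in t..y, f x) - (y - t) * f t = ∫ x in t..y, (f x - f t) := by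
      rw [intervalIntegral.integral_sub hf.intervalIntegrable
        (intervalIntegrable_const), intervalIntegral.integral_const, smul_eq_mul]
    have h3 : |∫ x in t..y, (f x - f t)| ≤ ∫ r in Set.uIoc t y, |f r - f t| := by
      simpa [Real.norm_eq_abs] using
        intervalIntegral.norm_integral_le_integral_norm_uIoc
          (f := fun x => f x - f t) (a := t) (b := y) (μ := volume)
    have heq : slope (fun u => ∫ x in (0:ℝ)..u, f x) t y - f t
        = ((∫ x in t..y, f x) - (y - t) * f t) / (y - t) := by
      rw [slope_def_field, div_sub' hyt, h1]
    rw [Real.norm_eq_abs, heq, h2, abs_div]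
    rw [div_le_div_iff₀ (abs_pos.2 hyt) (abs_pos.2 hyt)]
    exact mul_le_mul_of_nonneg_right h3 (abs_nonneg _)

private lemma mono_deriv_nonneg {m : ℝ → ℝ} (hm : Monotone m) (t : ℝ) : 0 ≤ deriv m t := by
  by_cases hd : DifferentiableAt ℝ m t
  · have hs := hd.hasDerivAt
    rw [hasDerivAt_iff_tendsto_slope] at hs
    refine ge_of_tendsto hs ?_
    filter_upwards [self_mem_nhdsWithin] with y (hy : y ≠ t)
    rw [slope_def_field]
    rcases lt_or_gt_of_ne hy with h | h
    · exact div_nonneg_of_nonpos (by simpa using hm h.le) (by linarith)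
    · exact div_nonneg (by simpa using hm h.le) (by linarith)
  · rw [deriv_zero_of_not_differentiableAt hd]

private lemma mono_part {m : ℝ → ℝ} (hm : Monotone m) {w : ℝ → ℝ} (hw : Integrable w volume)
    (hwle : ∀ᵐ t : ℝ, w t ≤ deriv m t) {a b : ℝ} (hab : a ≤ b) :
    ∫ t in Set.Ioc a b, w t ≤ m b - m a := by
  set μ := hm.stieltjesFunction.measure with hμ
  have hrn : ∀ᵐ t : ℝ, ENNReal.ofReal (w t) ≤ μ.rnDeriv volume t := by
    filter_upwards [hm.ae_hasDerivAt, hwle, Measure.rnDeriv_lt_top μ volume] with t h1 h2 h3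
    have hd : deriv m t = (μ.rnDeriv volume t).toReal := h1.deriv
    calc ENNReal.ofReal (w t) ≤ ENNReal.ofReal ((μ.rnDeriv volume t).toReal) :=
          ENNReal.ofReal_le_ofReal (hd ▸ h2)
      _ = μ.rnDeriv volume t := ENNReal.ofReal_toReal h3.ne
  have h0 : (∫ t in Set.Ioc a b, w t) = ∫ t in Set.Ioo a b, w t :=
    (setIntegral_congr_set MeasureTheory.Ioo_ae_eq_Ioc).symm
  have h1 : (∫ t in Set.Ioo a b, w t) ≤ ∫ t in Set.Ioo a b, w t ⊔ 0 :=
    integral_mono hw.integrableOn (hw.integrableOn.sup (integrable_zero _ _ _).integrableOn)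
      fun t => le_sup_left
  have h2 : (∫ t in Set.Ioo a b, w t ⊔ 0)
      = (∫⁻ t in Set.Ioo a b, ENNReal.ofReal (w t)).toReal := by
    rw [integral_eq_lintegral_of_nonneg_ae (f := fun t => w t ⊔ 0)
      (Filter.Eventually.of_forall fun t => le_sup_right)
      ((hw.aestronglyMeasurable.restrict).sup aestronglyMeasurable_const)]
    congr 1
    apply lintegral_congr fun t => ?_
    rcases le_total (w t) 0 with h | h
    · simp [ENNReal.ofReal_eq_zero.2 h, sup_eq_right.2 h]
    · simp [sup_eq_left.2 h]
  have h3 : (∫⁻ t in Set.Ioo a b, ENNReal.ofReal (w t)) ≤ μ (Set.Ioo a b) := by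
    refine le_trans (lintegral_mono_ae (ae_restrict_of_ae hrn)) ?_
    exact Measure.setLIntegral_rnDeriv_le _
  have hμIoo : μ (Set.Ioo a b) = ENNReal.ofReal
      (leftLim hm.stieltjesFunction b - hm.stieltjesFunction a) :=
    StieltjesFunction.measure_Ioo _
  have hub : (μ (Set.Ioo a b)).toReal ≤ m b - m a := by
    rw [hμIoo, ENNReal.toReal_ofReal']
    have hla : m a ≤ hm.stieltjesFunction a := hm.le_rightLim le_rfl
    have hlb : leftLim hm.stieltjesFunction b ≤ m b := by
      refine le_of_tendsto (hm.stieltjesFunction.mono.tendsto_leftLim b) ?_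
      filter_upwards [self_mem_nhdsWithin] with y (hy : y < b)
      exact hm.rightLim_le hy
    refine max_le (by linarith) (by linarith [hm hab])
  calc (∫ t in Set.Ioc a b, w t) = ∫ t in Set.Ioo a b, w t := h0
    _ ≤ (∫⁻ t in Set.Ioo a b, ENNReal.ofReal (w t)).toReal := h1.trans (le_of_eq h2)
    _ ≤ (μ (Set.Ioo a b)).toReal := by
        apply ENNReal.toReal_mono _ h3
        rw [hμIoo]; exact ENNReal.ofReal_ne_top
    _ ≤ m b - m a := hub

end Helpers

open Set Function intervalIntegral in
/-- **metric speed.** Let `γ : [0,1] → M` be an absolutely continuous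
curve in a metric space, i.e. `d(γ s, γ t) ≤ ∫_s^t g` for some `g ∈ L¹(0,1)`.
Then the metric speed `|γ̇|(t) = lim_{h→0} d(γ(t+h), γ(t))/|h|` exists for a.e.
`t ∈ [0,1]`, belongs to `L¹(0,1)`, and is bounded a.e. by every such `g`. -/
theorem metric_speed_exists
    {M : Type*} [MetricSpace M] (γ : ℝ → M) (g : ℝ → ℝ)
    (hg : IntegrableOn g (Set.Icc (0:ℝ) 1) volume)
    (hγ : ∀ s t : ℝ, 0 ≤ s → s ≤ t → t ≤ 1 →
      dist (γ s) (γ t) ≤ ∫ r in s..t, g r) :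
    ∃ v : ℝ → ℝ,
      IntegrableOn v (Set.Icc (0:ℝ) 1) volume ∧
      (∀ᵐ t ∂(volume.restrict (Set.Icc (0:ℝ) 1)),
        Tendsto (fun h : ℝ => dist (γ (t + h)) (γ t) / |h|) (𝓝[≠] 0) (𝓝 (v t))) ∧
      (∀ g' : ℝ → ℝ, IntegrableOn g' (Set.Icc (0:ℝ) 1) volume →
        (∀ s t : ℝ, 0 ≤ s → s ≤ t → t ≤ 1 → dist (γ s) (γ t) ≤ ∫ r in s..t, g' r) →
        ∀ᵐ t ∂(volume.restrict (Set.Icc (0:ℝ) 1)), v t ≤ g' t) := by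
  classical
  set gA : ℝ → ℝ := (Set.Icc (0:ℝ) 1).indicator (fun r => |g r|) with hgAdef
  have hgAint : Integrable gA volume := by
    rw [hgAdef, integrable_indicator_iff measurableSet_Icc]
    exact hg.abs
  have hgA0 : ∀ r, 0 ≤ gA r := fun r => Set.indicator_nonneg (fun r _ => abs_nonneg _) r
  set c : ℝ → ℝ := fun s => max 0 (min 1 s) with hcdef
  have hc_mem : ∀ s, c s ∈ Set.Icc (0:ℝ) 1 :=
    fun s => ⟨le_max_left _ _, max_le (by norm_num) (min_le_left _ _)⟩
  have hc_id : ∀ s, s ∈ Set.Icc (0:ℝ) 1 → c s = s := fun s hs => by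
    rw [hcdef]; dsimp only; rw [min_eq_right hs.2, max_eq_right hs.1]
  have hc_mono : Monotone c := fun s t hst => max_le_max le_rfl (min_le_min le_rfl hst)
  set Γ : ℝ → M := fun s => γ (c s) with hΓdef
  set G : ℝ → ℝ := fun u => ∫ x in (0:ℝ)..u, gA x with hGdef
  have hGdiff : ∀ a b : ℝ, G b - G a = ∫ x in a..b, gA x := fun a b =>
    integral_interval_sub_left hgAint.intervalIntegrable hgAint.intervalIntegrable
  have hGIoc : ∀ a b : ℝ, a ≤ b → G b - G a = ∫ x in Set.Ioc a b, gA x := fun a b hab => by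
    rw [hGdiff, intervalIntegral.integral_of_le hab]
  have key : ∀ a b : ℝ, a ≤ b → dist (Γ a) (Γ b) ≤ G b - G a := by
    intro a b hab
    have hmem_a := hc_mem a; have hmem_b := hc_mem b
    have hcab : c a ≤ c b := hc_mono hab
    have h1 : dist (γ (c a)) (γ (c b)) ≤ ∫ r in (c a)..(c b), g r :=
      hγ _ _ hmem_a.1 hcab hmem_b.2
    have hgint : IntervalIntegrable g volume (c a) (c b) := by
      apply MeasureTheory.IntegrableOn.intervalIntegrable
      apply hg.mono_set
      rw [Set.uIcc_of_le hcab]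
      exact Set.Icc_subset_Icc hmem_a.1 hmem_b.2
    have h2 : (∫ r in (c a)..(c b), g r) ≤ ∫ r in (c a)..(c b), gA r := by
      apply intervalIntegral.integral_mono_on hcab hgint hgAint.intervalIntegrable
      intro r hr
      have hr' : r ∈ Set.Icc (0:ℝ) 1 := ⟨le_trans hmem_a.1 hr.1, le_trans hr.2 hmem_b.2⟩
      rw [hgAdef, Set.indicator_of_mem hr']
      exact le_abs_self _
    have h3 : (∫ r in (c a)..(c b), gA r) ≤ ∫ x in Set.Ioc a b, gA x := by
      rw [intervalIntegral.integral_of_le hcab, hgAdef,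
        setIntegral_indicator measurableSet_Icc, setIntegral_indicator measurableSet_Icc]
      apply setIntegral_mono_set
      · exact IntegrableOn.mono_set hg.abs Set.inter_subset_right
      · filter_upwards with r using abs_nonneg _
      · apply HasSubset.Subset.eventuallyLE
        rintro r ⟨⟨hr1, hr2⟩, hr3⟩
        refine ⟨⟨?_, ?_⟩, hr3⟩
        · rcases le_or_gt a 1 with ha | ha
          · have : a ≤ c a := le_max_of_le_right (le_min ha le_rfl)
            linarith
          · have : c a = 1 := by
              rw [hcdef]; dsimp only; rw [min_eq_left ha.le]; exact max_eq_right zero_le_one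
            have hr3' := hr3.2
            rw [this] at hr1
            linarith
        · rcases le_or_gt 0 b with hb | hb
          · have : c b ≤ b := max_le hb (min_le_right _ _)
            linarith
          · have : c b = 0 := by
              rw [hcdef]; dsimp only; rw [min_eq_right (by linarith : b ≤ 1)]
              exact max_eq_left hb.le
            have h0a := (hc_mem a).1
            rw [this] at hr2
            linarith
    calc dist (Γ a) (Γ b) = dist (γ (c a)) (γ (c b)) := rfl
      _ ≤ ∫ r in (c a)..(c b), g r := h1
      _ ≤ ∫ r in (c a)..(c b), gA r := h2
      _ ≤ ∫ x in Set.Ioc a b, gA x := h3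
      _ = G b - G a := (hGIoc a b hab).symm
  have hGcont : Continuous G :=
    intervalIntegral.continuous_primitive (fun a b => hgAint.intervalIntegrable) 0
  have hΓcont : Continuous Γ := by
    rw [Metric.continuous_iff]
    intro s ε hε
    obtain ⟨δ, hδpos, hδ⟩ := Metric.continuous_iff.1 hGcont s ε hε
    refine ⟨δ, hδpos, fun u hus => ?_⟩
    rcases le_total u s with h | h
    · calc dist (Γ u) (Γ s) ≤ G s - G u := key u s h
        _ ≤ |G s - G u| := le_abs_self _
        _ = dist (G u) (G s) := by rw [Real.dist_eq, abs_sub_comm]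
        _ < ε := hδ u hus
    · rw [dist_comm]
      calc dist (Γ s) (Γ u) ≤ G u - G s := key s u h
        _ ≤ |G u - G s| := le_abs_self _
        _ = dist (G u) (G s) := by rw [Real.dist_eq]
        _ < ε := hδ u hus
  obtain ⟨C, hCcount, hCdense⟩ := (isCompact_Icc.image hΓcont).isSeparable
  obtain ⟨x, hx⟩ := (hCcount.insert (γ 0)).exists_eq_range (Set.insert_nonempty _ _)
  have hdense : ∀ s : ℝ, ∀ ε : ℝ, 0 < ε → ∃ n : ℕ, dist (x n) (Γ s) < ε := by
    intro s ε hε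
    have hmem : Γ s ∈ Γ '' Set.Icc 0 1 := by
      refine ⟨c s, hc_mem s, ?_⟩
      show γ (c (c s)) = γ (c s)
      rw [hc_id _ (hc_mem s)]
    have hcl : Γ s ∈ closure (Set.range x) := by
      rw [← hx]
      exact closure_mono (Set.subset_insert _ _) (hCdense hmem)
    obtain ⟨y, hy, hyd⟩ := Metric.mem_closure_iff.1 hcl ε hε
    obtain ⟨n, rfl⟩ := hy
    exact ⟨n, by rwa [dist_comm]⟩
  set f : ℕ → ℝ → ℝ := fun n s => dist (x n) (Γ s) with hfdef
  have hfdist : ∀ (n : ℕ) (a b : ℝ), |f n b - f n a| ≤ dist (Γ a) (Γ b) := by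
    intro n a b
    rw [hfdef]; dsimp only
    rw [dist_comm (x n) (Γ b), dist_comm (x n) (Γ a), dist_comm (Γ a) (Γ b)]
    exact abs_dist_sub_le _ _ _
  have hfG : ∀ (n : ℕ) (a b : ℝ), a ≤ b → |f n b - f n a| ≤ G b - G a :=
    fun n a b hab => (hfdist n a b).trans (key a b hab)
  set m : ℕ → ℝ → ℝ := fun n s => G s - f n s with hmdef
  set p : ℕ → ℝ → ℝ := fun n s => G s + f n s with hpdef
  have hm : ∀ n, Monotone (m n) := by
    intro n a b hab
    have h := abs_le.1 (hfG n a b hab)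
    show G a - f n a ≤ G b - f n b
    linarith [h.2]
  have hp : ∀ n, Monotone (p n) := by
    intro n a b hab
    have h := abs_le.1 (hfG n a b hab)
    show G a + f n a ≤ G b + f n b
    linarith [h.1]
  set V : ℝ → ENNReal := fun t => ⨆ n, (‖deriv (f n) t‖₊ : ENNReal) with hVdef
  set v : ℝ → ℝ := fun t => (V t).toReal with hvdef
  have hvmeas : Measurable v := by
    apply Measurable.ennreal_toReal
    exact Measurable.iSup fun n => (measurable_deriv (f n)).nnnorm.coe_nnreal_ennreal
  have hv0 : ∀ t, 0 ≤ v t := fun t => ENNReal.toReal_nonneg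
  have hae1 : ∀ᵐ t : ℝ, HasDerivAt G (gA t) t := by
    filter_upwards [leb_pt hgAint] with t ht using primitive_hasDerivAt hgAint ht
  have hae2 : ∀ᵐ t : ℝ, ∀ n : ℕ, DifferentiableAt ℝ (m n) t ∧ DifferentiableAt ℝ (p n) t := by
    rw [ae_all_iff]
    intro n
    filter_upwards [(hm n).ae_differentiableAt, (hp n).ae_differentiableAt] with t h1 h2
    exact ⟨h1, h2⟩
  have hgood : ∀ᵐ t : ℝ,
      (∀ n : ℕ, |deriv (f n) t| ≤ v t) ∧ v t ≤ gA t ∧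
      (∀ n : ℕ, DifferentiableAt ℝ (f n) t) ∧
      (∀ n : ℕ, deriv (m n) t = gA t - deriv (f n) t) ∧
      (∀ n : ℕ, deriv (p n) t = gA t + deriv (f n) t) := by
    filter_upwards [hae1, hae2] with t hG hmp
    have hfm : ∀ n : ℕ, f n = fun s => G s - m n s := by
      intro n; funext s; show f n s = G s - (G s - f n s); ring
    have hdf : ∀ n : ℕ, DifferentiableAt ℝ (f n) t := fun n => by
      rw [hfm n]; exact hG.differentiableAt.sub (hmp n).1
    have hdm : ∀ n : ℕ, deriv (m n) t = gA t - deriv (f n) t := by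
      intro n
      have h1 : deriv (f n) t = gA t - deriv (m n) t := by
        conv_lhs => rw [hfm n]
        rw [deriv_fun_sub hG.differentiableAt (hmp n).1, hG.deriv]
      linarith
    have hdp : ∀ n : ℕ, deriv (p n) t = gA t + deriv (f n) t := by
      intro n
      have hpe : p n = fun s => G s + f n s := rfl
      rw [hpe, deriv_fun_add hG.differentiableAt (hdf n), hG.deriv]
    have habs : ∀ n : ℕ, |deriv (f n) t| ≤ gA t := by
      intro n
      have h1 := mono_deriv_nonneg (hm n) t
      have h2 := mono_deriv_nonneg (hp n) t
      rw [hdm n] at h1; rw [hdp n] at h2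
      rw [abs_le]; constructor <;> linarith
    have hVle : V t ≤ ENNReal.ofReal (gA t) := by
      rw [hVdef]
      refine iSup_le fun n => ?_
      rw [← enorm_eq_nnnorm, Real.enorm_eq_ofReal_abs]
      exact ENNReal.ofReal_le_ofReal (habs n)
    have hVne : V t ≠ ⊤ := (lt_of_le_of_lt hVle ENNReal.ofReal_lt_top).ne
    refine ⟨fun n => ?_, ?_, hdf, hdm, hdp⟩
    · have hle : (‖deriv (f n) t‖₊ : ENNReal) ≤ V t :=
        le_iSup (fun k => (‖deriv (f k) t‖₊ : ENNReal)) n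
      have := ENNReal.toReal_mono hVne hle
      rwa [← enorm_eq_nnnorm, Real.enorm_eq_ofReal_abs, ENNReal.toReal_ofReal (abs_nonneg _)] at this
    · have := ENNReal.toReal_mono ENNReal.ofReal_ne_top hVle
      rwa [ENNReal.toReal_ofReal (hgA0 t)] at this
  have hvint : Integrable v volume := by
    apply Integrable.mono hgAint hvmeas.aestronglyMeasurable
    filter_upwards [hgood] with t ht
    rw [Real.norm_eq_abs, Real.norm_eq_abs, abs_of_nonneg (hv0 t), abs_of_nonneg (hgA0 t)]
    exact ht.2.1
  have hwint : Integrable (fun t => gA t - v t) volume := hgAint.sub hvint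
  have hfv : ∀ (n : ℕ) (a b : ℝ), a ≤ b → |f n b - f n a| ≤ ∫ r in Set.Ioc a b, v r := by
    intro n a b hab
    have hwm : ∀ᵐ t : ℝ, gA t - v t ≤ deriv (m n) t := by
      filter_upwards [hgood] with t ht
      rw [ht.2.2.2.1 n]
      have := (abs_le.1 (ht.1 n)).2
      linarith
    have hwp : ∀ᵐ t : ℝ, gA t - v t ≤ deriv (p n) t := by
      filter_upwards [hgood] with t ht
      rw [ht.2.2.2.2 n]
      have := (abs_le.1 (ht.1 n)).1
      linarith
    have h1 := mono_part (hm n) hwint hwm hab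
    have h2 := mono_part (hp n) hwint hwp hab
    have h3 : (∫ t in Set.Ioc a b, (gA t - v t)) = (G b - G a) - ∫ t in Set.Ioc a b, v t := by
      rw [integral_sub hgAint.integrableOn hvint.integrableOn, hGIoc a b hab]
    rw [h3] at h1 h2
    have hm' : m n b - m n a = (G b - G a) - (f n b - f n a) := by
      show (G b - f n b) - (G a - f n a) = _; ring
    have hp' : p n b - p n a = (G b - G a) + (f n b - f n a) := by
      show (G b + f n b) - (G a + f n a) = _; ring
    rw [hm'] at h1; rw [hp'] at h2
    rw [abs_le]; constructor <;> linarith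
  have hdistv : ∀ a b : ℝ, a ≤ b → dist (Γ a) (Γ b) ≤ ∫ r in Set.Ioc a b, v r := by
    intro a b hab
    refine le_of_forall_pos_le_add fun ε hε => ?_
    obtain ⟨n, hn⟩ := hdense b (ε/2) (by positivity)
    have h1 : dist (Γ a) (Γ b) ≤ dist (Γ a) (x n) + dist (x n) (Γ b) := dist_triangle _ _ _
    have h2 : dist (Γ a) (x n) = f n a := dist_comm _ _
    have h3 : f n a ≤ f n b + |f n b - f n a| := by
      have := le_abs_self (f n a - f n b)
      rw [abs_sub_comm] at this
      linarith
    have h4 : f n b = dist (x n) (Γ b) := rfl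
    have h5 := hfv n a b hab
    calc dist (Γ a) (Γ b) ≤ f n a + dist (x n) (Γ b) := by rw [← h2]; exact h1
      _ ≤ (f n b + |f n b - f n a|) + dist (x n) (Γ b) := by linarith
      _ ≤ (∫ r in Set.Ioc a b, v r) + ε := by
          rw [h4] at *
          linarith
  have main : ∀ᵐ t : ℝ, t ∈ Set.Ioo (0:ℝ) 1 →
      Tendsto (fun h : ℝ => dist (γ (t + h)) (γ t) / |h|) (𝓝[≠] 0) (𝓝 (v t)) := by
    filter_upwards [hgood, leb_pt hvint] with t ht hlv
    intro htIoo
    have havgv : Tendsto (fun h : ℝ => (∫ r in Set.uIoc t (t+h), v r) / |h|)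
        (𝓝[≠] (0:ℝ)) (𝓝 (v t)) := avg_tendsto hvint hlv
    rw [Metric.tendsto_nhds]
    intro ε hε
    obtain ⟨n, hn⟩ : ∃ n : ℕ, v t - ε/2 < |deriv (f n) t| := by
      rcases eq_or_lt_of_le (hv0 t) with h0 | h0
      · exact ⟨0, lt_of_lt_of_le (by linarith) (abs_nonneg _)⟩
      · by_contra hcon
        push_neg at hcon
        have hsup : V t ≤ ENNReal.ofReal (v t - ε/2) := by
          refine iSup_le fun k => ?_
          rw [← enorm_eq_nnnorm, Real.enorm_eq_ofReal_abs]
          exact ENNReal.ofReal_le_ofReal (hcon k)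
        have h2 := ENNReal.toReal_mono ENNReal.ofReal_ne_top hsup
        rw [ENNReal.toReal_ofReal'] at h2
        rcases max_cases (v t - ε/2) 0 with ⟨he, _⟩ | ⟨he, _⟩ <;> rw [he] at h2 <;> linarith
    have hq : Tendsto (fun h : ℝ => |f n (t+h) - f n t| / |h|)
        (𝓝[≠] (0:ℝ)) (𝓝 |deriv (f n) t|) := by
      have hs := (ht.2.2.1 n).hasDerivAt
      rw [hasDerivAt_iff_tendsto_slope] at hs
      have habs := ((continuous_abs.tendsto _).comp hs).comp (map_add_nhdsNE t)
      refine habs.congr fun h => ?_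
      simp only [Function.comp, slope_def_field]
      rw [abs_div, add_sub_cancel_left]
    have e1 : ∀ᶠ h : ℝ in 𝓝[≠] (0:ℝ), |h| < min t (1 - t) := by
      have hp : (0:ℝ) < min t (1 - t) := lt_min htIoo.1 (by linarith [htIoo.2])
      have := eventually_abs_sub_lt (0:ℝ) hp
      refine ((this.mono fun h hh => ?_).filter_mono nhdsWithin_le_nhds)
      simpa using hh
    have e2 : ∀ᶠ h : ℝ in 𝓝[≠] (0:ℝ),
        (∫ r in Set.uIoc t (t+h), v r) / |h| < v t + ε :=
      (tendsto_order.1 havgv).2 _ (by linarith)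
    have e3 : ∀ᶠ h : ℝ in 𝓝[≠] (0:ℝ),
        |deriv (f n) t| - ε/2 < |f n (t+h) - f n t| / |h| :=
      (tendsto_order.1 hq).1 _ (by linarith)
    filter_upwards [e1, e2, e3, self_mem_nhdsWithin] with h h1 h2 h3 hh
    replace hh : h ≠ 0 := hh
    have hpos : (0:ℝ) < |h| := abs_pos.2 hh
    have habs := abs_lt.1 h1
    have hmem : t + h ∈ Set.Icc (0:ℝ) 1 := by
      constructor
      · have := habs.1; have := lt_min_iff.1 h1; nlinarith [neg_abs_le h]
      · have := lt_min_iff.1 h1; nlinarith [le_abs_self h]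
    have htmem : t ∈ Set.Icc (0:ℝ) 1 := ⟨htIoo.1.le, htIoo.2.le⟩
    have hγΓ1 : γ (t + h) = Γ (t + h) := by
      show γ (t+h) = γ (c (t+h)); rw [hc_id _ hmem]
    have hγΓ2 : γ t = Γ t := by
      show γ t = γ (c t); rw [hc_id _ htmem]
    have hup : dist (γ (t+h)) (γ t) ≤ ∫ r in Set.uIoc t (t+h), v r := by
      rw [hγΓ1, hγΓ2]
      rcases le_total 0 h with hsg | hsg
      · rw [Set.uIoc_of_le (by linarith : t ≤ t + h), dist_comm]
        exact hdistv t (t+h) (by linarith)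
      · rw [Set.uIoc_of_ge (by linarith : t + h ≤ t)]
        exact hdistv (t+h) t (by linarith)
    have hlow : |f n (t+h) - f n t| ≤ dist (γ (t+h)) (γ t) := by
      rw [hγΓ1, hγΓ2, dist_comm]
      exact hfdist n t (t+h)
    rw [Real.dist_eq, abs_sub_lt_iff]
    constructor
    · have hd : dist (γ (t+h)) (γ t)/|h| ≤ (∫ r in Set.uIoc t (t+h), v r)/|h| := by
        gcongr
      linarith
    · have hq2 : |deriv (f n) t| - ε/2 < dist (γ (t+h)) (γ t)/|h| :=
        lt_of_lt_of_le h3 (by gcongr)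
      linarith
  have hIooae : ∀ᵐ t ∂(volume.restrict (Set.Icc (0:ℝ) 1)), t ∈ Set.Ioo (0:ℝ) 1 := by
    rw [ae_restrict_iff' measurableSet_Icc]
    have h01 : ∀ᵐ t : ℝ, t ∉ ({0, 1} : Set ℝ) :=
      (((Set.countable_singleton (1:ℝ)).insert 0).ae_notMem volume)
    filter_upwards [h01] with t ht htIcc
    simp only [Set.mem_insert_iff, Set.mem_singleton_iff, not_or] at ht
    exact ⟨lt_of_le_of_ne htIcc.1 (Ne.symm ht.1), lt_of_le_of_ne htIcc.2 ht.2⟩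
  refine ⟨v, hvint.integrableOn, ?_, ?_⟩
  · filter_upwards [hIooae, ae_restrict_of_ae main] with t h1 h2 using h2 h1
  · intro g' hg' hγ'
    set gA' : ℝ → ℝ := (Set.Icc (0:ℝ) 1).indicator g' with hgA'def
    have hgA'int : Integrable gA' volume := by
      rw [hgA'def, integrable_indicator_iff measurableSet_Icc]
      exact hg'
    have main3 : ∀ᵐ t : ℝ, t ∈ Set.Ioo (0:ℝ) 1 → v t ≤ g' t := by
      filter_upwards [main, leb_pt hgA'int] with t hten hlp
      intro htIoo
      have havg' := avg_tendsto hgA'int hlp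
      have hsubf : 𝓝[>](0:ℝ) ≤ 𝓝[≠](0:ℝ) :=
        nhdsWithin_mono 0 fun y hy => ne_of_gt hy
      have hq := (hten htIoo).mono_left hsubf
      have hB : Tendsto (fun h : ℝ => (∫ r in Set.uIoc t (t+h), gA' r)/|h|)
          (𝓝[>](0:ℝ)) (𝓝 (g' t)) := by
        have hx := havg'.mono_left hsubf
        have htmem' : t ∈ Set.Icc (0:ℝ) 1 := ⟨htIoo.1.le, htIoo.2.le⟩
        have : gA' t = g' t := by rw [hgA'def]; exact Set.indicator_of_mem htmem' g'
        rwa [this] at hx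
      refine le_of_tendsto_of_tendsto hq hB ?_
      have hev : Set.Ioo (0:ℝ) (1 - t) ∈ 𝓝[>] (0:ℝ) :=
        Ioo_mem_nhdsGT_of_mem ⟨le_rfl, by linarith [htIoo.2]⟩
      filter_upwards [hev] with h hh
      have h0 : 0 < h := hh.1
      have hd : dist (γ t) (γ (t+h)) ≤ ∫ r in t..(t+h), g' r :=
        hγ' t (t+h) htIoo.1.le (by linarith) (by linarith [hh.2])
      have he : (∫ r in t..(t+h), g' r) = ∫ r in Set.uIoc t (t+h), gA' r := by
        rw [intervalIntegral.integral_of_le (by linarith : t ≤ t + h),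
          Set.uIoc_of_le (by linarith : t ≤ t + h)]
        refine (setIntegral_congr_fun measurableSet_Ioc fun r hr => ?_).symm
        have hr' : r ∈ Set.Ioc t (t + h) := hr
        have hrmem : r ∈ Set.Icc (0:ℝ) 1 :=
          ⟨by linarith [hr'.1, htIoo.1], by linarith [hr'.2, hh.2]⟩
        show gA' r = g' r
        rw [hgA'def]; exact Set.indicator_of_mem hrmem g'
      rw [dist_comm] at hd
      rw [he] at hd
      show dist (γ (t+h)) (γ t)/|h| ≤ (∫ r in Set.uIoc t (t+h), gA' r)/|h|
      gcongr
    filter_upwards [hIooae, ae_restrict_of_ae main3] with t h1 h2 using h2 h1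
end
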